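/- Let x, y, a, b be vertices of the tree T and suppose that a and b lie in the same connected component of the graph obtained from T by deleting any edge of the geodesic edge-path from x to y (equivalently, no edge of the geodesic path from x to y separates a from b). If moreover a = b, then ⟨c_z(x,y)δ_b, δ_a⟩ = w^ℓ for all z ∈ 𝔻, where ℓ is the number of edges of the geodesic path from x to y that are incident to the vertex a; and if a ≠ b, then for each edge of the geodesic path from x to y, a and b lie on the same side of that edge and ⟨c_z(x,y)δ_b, δ_a⟩ = 0 for all z ∈ 𝔻. -/

import Mathlib

noncomputable section

open scoped ComplexConjugate

/-- `ℓ²(X)`: the Hilbert space of square-summable complex functions on `X`. -/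
abbrev ell2 (X : Type) : Type := lp (fun _ : X => ℂ) 2

/-- The Dirac function `δ_v` at a vertex `v`. -/
noncomputable def delta {X : Type} [DecidableEq X] (v : X) : ell2 X :=
  lp.single 2 v (1 : ℂ)

/-- `w = √(1 − z²)`, using the principal branch of the square root, which is
holomorphic off the negative real axis and positive on the positive reals. -/
noncomputable def W (z : ℂ) : ℂ := (1 - z ^ 2) ^ ((1 : ℂ) / 2)

/-- The defining property of the edge operator `c_z(x,y)` for adjacent vertices
`x, y`: it sends `δ_x ↦ wδ_x − zδ_y`, `δ_y ↦ wδ_y + zδ_x`, and fixes `δ_v` for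
every other vertex `v`. -/
def IsEdgeOp {X : Type} [DecidableEq X] (z : ℂ) (x y : X)
    (A : ell2 X →L[ℂ] ell2 X) : Prop :=
  A (delta x) = W z • delta x - z • delta y ∧
  A (delta y) = W z • delta y + z • delta x ∧
  ∀ v : X, v ≠ x → v ≠ y → A (delta v) = delta v

/-- The product `f(v₀,v₁) * f(v₁,v₂) * ⋯ * f(v_{n−1},v_n)` along a walk
`v₀, v₁, …, v_n`. -/
def walkProd {X : Type} {T : SimpleGraph X} {E : Type} [Monoid E]
    (f : X → X → E) : {a b : X} → T.Walk a b → E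
  | _, _, SimpleGraph.Walk.nil => 1
  | _, _, SimpleGraph.Walk.cons (u := u) (v := v) _ p => f u v * walkProd f p

/-! Each edge operator `c_z(u,v)` touches only the coordinates `u` and `v`, so the coordinate
at `a` of `c_z(x,y) δ_b` can be computed by peeling off the first edge `{x, x₁}` of the geodesic.
If `a` is neither endpoint nothing changes. If `a = x`, the new coordinate is
`w·(old coordinate at x) + z·(old coordinate at x₁)`; the second term vanishes because `b` lies on
the `x`-side of the first edge, so `b ≠ x₁`, while `x₁` and `b` lie on the same side of every
later edge. A geodesic never returns to `x`, so this edge contributes the only factor `w`.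
The case `a = x₁` is symmetric. -/

section EdgeOperator

variable {X : Type} [DecidableEq X]

lemma delta_apply (v w : X) : delta v w = if w = v then 1 else 0 := by
  simp [delta, lp.single_apply, Pi.single_apply]

lemma inner_delta_left (a : X) (η : ell2 X) : inner ℂ (delta a) η = η a := by
  simp [delta, lp.inner_single_left]

lemma hasSum_apply_mul_delta (A : ell2 X →L[ℂ] ell2 X) (η : ell2 X) (a : X) :
    HasSum (fun i => η i * A (delta i) a) (A η a) := by
  have hη : HasSum (fun i => η i • delta i) η := by
    simpa [delta, ← lp.single_smul] using lp.hasSum_single (by norm_num) η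
  simpa only [ContinuousLinearMap.comp_apply, map_smul, smul_eq_mul, lp.evalCLM,
    LinearMap.mkContinuous_apply, lp.evalₗ_apply] using
    hη.mapL ((lp.evalCLM ℂ (fun _ : X => ℂ) 2 a).comp A)

variable {z : ℂ} {u v : X} {A : ell2 X →L[ℂ] ell2 X}

lemma IsEdgeOp.apply_eq_sum_pair (hA : IsEdgeOp z u v A) (η : ell2 X) {a : X}
    (ha : a = u ∨ a = v) : A η a = ∑ i ∈ {u, v}, η i * A (delta i) a := by
  refine (hasSum_apply_mul_delta A η a).unique (hasSum_sum_of_ne_finset_zero fun i hi => ?_)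
  simp only [Finset.mem_insert, Finset.mem_singleton, not_or] at hi
  rw [hA.2.2 i hi.1 hi.2, delta_apply, if_neg (by rintro rfl; tauto), mul_zero]

lemma IsEdgeOp.apply_left (hA : IsEdgeOp z u v A) (huv : u ≠ v) (η : ell2 X) :
    A η u = W z * η u + z * η v := by
  rw [hA.apply_eq_sum_pair η (.inl rfl), Finset.sum_pair huv, hA.1, hA.2.1]
  simp only [lp.coeFn_sub, lp.coeFn_add, lp.coeFn_smul, Pi.sub_apply, Pi.add_apply,
    Pi.smul_apply, smul_eq_mul, delta_apply, if_pos, if_neg huv]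
  ring

lemma IsEdgeOp.apply_right (hA : IsEdgeOp z u v A) (huv : u ≠ v) (η : ell2 X) :
    A η v = W z * η v - z * η u := by
  rw [hA.apply_eq_sum_pair η (.inr rfl), Finset.sum_pair huv, hA.1, hA.2.1]
  simp only [lp.coeFn_sub, lp.coeFn_add, lp.coeFn_smul, Pi.sub_apply, Pi.add_apply,
    Pi.smul_apply, smul_eq_mul, delta_apply, if_pos, if_neg huv.symm]
  ring

lemma IsEdgeOp.apply_delta_of_ne (hA : IsEdgeOp z u v A) {a : X} (hau : a ≠ u) (hav : a ≠ v)
    (i : X) : A (delta i) a = delta i a := by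
  rcases eq_or_ne i u with rfl | hiu
  · simp only [hA.1, lp.coeFn_sub, lp.coeFn_smul, Pi.sub_apply, Pi.smul_apply, delta_apply,
      if_neg hau, if_neg hav, smul_zero, sub_zero]
  rcases eq_or_ne i v with rfl | hiv
  · simp only [hA.2.1, lp.coeFn_add, lp.coeFn_smul, Pi.add_apply, Pi.smul_apply, delta_apply,
      if_neg hau, if_neg hav, smul_zero, add_zero]
  rw [hA.2.2 i hiu hiv]

lemma IsEdgeOp.apply_of_ne (hA : IsEdgeOp z u v A) {a : X} (hau : a ≠ u) (hav : a ≠ v)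
    (η : ell2 X) : A η a = η a := by
  have hsupp : ∀ i ≠ a, η i * A (delta i) a = 0 := fun i hia => by
    simp [hA.apply_delta_of_ne hau hav, delta_apply, Ne.symm hia]
  simpa [hA.apply_delta_of_ne hau hav, delta_apply] using
    (hasSum_apply_mul_delta A η a).unique (hasSum_single a hsupp)

end EdgeOperator

namespace SimpleGraph.Walk

variable {V : Type} {G : SimpleGraph V} {u v w : V}

lemma dist_getVert_of_length_eq_dist {p : G.Walk u v} (hp : p.length = G.dist u v) {k : ℕ}
    (hk : k ≤ p.length) : G.dist u (p.getVert k) = k := by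
  rw [← length_eq_dist_of_subwalk hp (p.isSubwalk_take k), take_length, min_eq_left hk]

lemma dist_getVert_lt_dist_getVert_succ {p : G.Walk u v} (hp : p.length = G.dist u v) {i : ℕ}
    (hi : i < p.length) : G.dist u (p.getVert i) < G.dist u (p.getVert (i + 1)) := by
  rw [dist_getVert_of_length_eq_dist hp hi.le, dist_getVert_of_length_eq_dist hp hi]
  exact i.lt_succ_self

/-- Encodes that no edge of `p` separates `a` from `b`: in a tree, a vertex lies on the
`p.getVert i` side of the `i`-th edge of `p` iff it is closer to `p.getVert i` than to
`p.getVert (i + 1)`. -/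
def NoEdgeSeparates (p : G.Walk u v) (a b : V) : Prop :=
  ∀ i < p.length, (G.dist a (p.getVert i) < G.dist a (p.getVert (i + 1)) ↔
    G.dist b (p.getVert i) < G.dist b (p.getVert (i + 1)))

namespace NoEdgeSeparates

variable {p : G.Walk u v} {a b c : V}

lemma symm (h : p.NoEdgeSeparates a b) : p.NoEdgeSeparates b a :=
  fun i hi => (h i hi).symm

lemma trans (hab : p.NoEdgeSeparates a b) (hbc : p.NoEdgeSeparates b c) :
    p.NoEdgeSeparates a c :=
  fun i hi => (hab i hi).trans (hbc i hi)

lemma of_cons {h : G.Adj w u} (hab : (cons h p).NoEdgeSeparates a b) :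
    p.NoEdgeSeparates a b := fun i hi => by
  simpa only [getVert_cons_succ] using hab (i + 1) (by simp [hi])

end NoEdgeSeparates

lemma not_noEdgeSeparates_cons_start (h : G.Adj u v) (p : G.Walk v w) :
    ¬(cons h p).NoEdgeSeparates u v := fun huv => by
  have := huv 0 (by simp)
  simp [dist_eq_one_iff_adj.mpr h, dist_eq_one_iff_adj.mpr h.symm] at this

lemma noEdgeSeparates_of_cons_of_length_eq_dist {h : G.Adj u v} {p : G.Walk v w}
    (hp : (cons h p).length = G.dist u w) : p.NoEdgeSeparates u v := fun i hi =>
  have hp' : p.length = G.dist v w := length_eq_dist_of_subwalk hp (p.isSubwalk_cons h)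
  iff_of_true
    (by simpa only [getVert_cons_succ] using
      dist_getVert_lt_dist_getVert_succ hp (i := i + 1) (by simp [hi]))
    (dist_getVert_lt_dist_getVert_succ hp' hi)

variable [DecidableEq V]

def incidentEdgeCount (p : G.Walk u v) (a : V) : ℕ :=
  ((Finset.range p.length).filter (fun i => p.getVert i = a ∨ p.getVert (i + 1) = a)).card

lemma incidentEdgeCount_cons (h : G.Adj u v) (p : G.Walk v w) (a : V) :
    (cons h p).incidentEdgeCount a =
      (if u = a ∨ v = a then 1 else 0) + p.incidentEdgeCount a := by
  simp only [incidentEdgeCount, Finset.card_filter]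
  rw [length_cons, Finset.sum_range_succ', add_comm]
  simp only [getVert_cons_succ, getVert_zero, zero_add]
  rfl

lemma incidentEdgeCount_eq_zero {p : G.Walk u v} {a : V} (ha : a ∉ p.support) :
    p.incidentEdgeCount a = 0 := by
  simp only [incidentEdgeCount, Finset.card_eq_zero, Finset.filter_eq_empty_iff]
  rintro i - (hi | hi) <;> exact ha (hi ▸ p.getVert_mem_support _)

end SimpleGraph.Walk

open SimpleGraph Walk in
theorem walkProd_apply_delta_of_noEdgeSeparates {X : Type} [DecidableEq X] {G : SimpleGraph X}
    {z : ℂ} {c : X → X → (ell2 X →L[ℂ] ell2 X)}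
    (hedge : ∀ u v : X, G.Adj u v → IsEdgeOp z u v (c u v)) {x y : X} (p : G.Walk x y)
    (hp : p.length = G.dist x y) {a b : X} (hab : p.NoEdgeSeparates a b) :
    walkProd c p (delta b) a = if a = b then W z ^ p.incidentEdgeCount a else 0 := by
  induction p generalizing a b with
  | nil => simp [walkProd, delta_apply, incidentEdgeCount]
  | @cons x x₁ y h q ih =>
    have hq : q.length = G.dist x₁ y := length_eq_dist_of_subwalk hp (q.isSubwalk_cons h)
    have hx₁x : q.NoEdgeSeparates x₁ x := (noEdgeSeparates_of_cons_of_length_eq_dist hp).symm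
    have hxq : x ∉ q.support := ((cons_isPath_iff h q).mp (isPath_of_length_eq_dist _ hp)).2
    have hA := hedge x x₁ h
    change c x x₁ (walkProd c q (delta b)) a = _
    rw [incidentEdgeCount_cons]
    by_cases hax : a = x
    · subst hax
      have hb : x₁ ≠ b := by rintro rfl; exact not_noEdgeSeparates_cons_start h q hab
      rw [hA.apply_left h.ne, ih hq hab.of_cons, ih hq (hx₁x.trans hab.of_cons),
        incidentEdgeCount_eq_zero hxq]
      by_cases hab' : a = b <;> simp [hab', hb]
    by_cases hax₁ : a = x₁
    · subst hax₁
      have hb : x ≠ b := by rintro rfl; exact not_noEdgeSeparates_cons_start h q hab.symm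
      rw [hA.apply_right h.ne, ih hq hab.of_cons, ih hq (hx₁x.symm.trans hab.of_cons)]
      by_cases hab' : a = b <;> simp [hab', hb, add_comm 1, pow_succ']
    · rw [hA.apply_of_ne hax hax₁, ih hq hab.of_cons,
        if_neg (show ¬(x = a ∨ x₁ = a) by tauto), zero_add]

theorem matrix_coefficient_same_side_general {X : Type} [DecidableEq X] (T : SimpleGraph X)
    (c : ℂ → X → X → (ell2 X →L[ℂ] ell2 X))
    (hedge : ∀ z ∈ Metric.ball (0 : ℂ) 1, ∀ u v : X, T.Adj u v →
      IsEdgeOp z u v (c z u v))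
    (hgeo : ∀ z ∈ Metric.ball (0 : ℂ) 1, ∀ u v : X, ∀ p : T.Walk u v,
      p.length = T.dist u v → c z u v = walkProd (c z) p)
    (x y a b : X) (p : T.Walk x y) (hp : p.length = T.dist x y)
    (hside : ∀ i < p.length,
      (T.dist a (p.getVert i) < T.dist a (p.getVert (i + 1)) ↔
        T.dist b (p.getVert i) < T.dist b (p.getVert (i + 1)))) :
    ∀ z ∈ Metric.ball (0 : ℂ) 1,
      (a = b →
        (inner ℂ (delta a) (c z x y (delta b)) : ℂ) =
          W z ^ ((Finset.range p.length).filter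
            (fun i => p.getVert i = a ∨ p.getVert (i + 1) = a)).card) ∧
      (a ≠ b → (inner ℂ (delta a) (c z x y (delta b)) : ℂ) = 0) := by
  intro z hz
  rw [inner_delta_left, hgeo z hz x y p hp,
    walkProd_apply_delta_of_noEdgeSeparates (hedge z hz) p hp hside]
  exact ⟨fun hab => if_pos hab, fun hab => if_neg hab⟩

/-- Let `x, y, a, b` be vertices of the tree `T` and suppose that `a`
and `b` lie in the same connected component of `T` minus any edge of the geodesic
edge-path from `x` to `y` (for an edge `{u, u'}` of a tree, a vertex `w` lies on the
`u`-side iff `d(w,u) < d(w,u')`, so "same side" is encoded by the equivalence of these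
comparisons for `a` and `b`).  If moreover `a = b`, then
`⟨c_z(x,y)δ_b, δ_a⟩ = w^ℓ` for all `z ∈ 𝔻`, where `ℓ` is the number of edges of the
geodesic path incident to `a`; and if `a ≠ b`, then `⟨c_z(x,y)δ_b, δ_a⟩ = 0` for all
`z ∈ 𝔻`. -/
theorem matrix_coefficient_same_side {X : Type} [DecidableEq X] (T : SimpleGraph X)
    (hconn : T.Connected) (hacyc : T.IsAcyclic)
    (c : ℂ → X → X → (ell2 X →L[ℂ] ell2 X))
    (hedge : ∀ z ∈ Metric.ball (0 : ℂ) 1, ∀ u v : X, T.Adj u v →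
      IsEdgeOp z u v (c z u v))
    (hgeo : ∀ z ∈ Metric.ball (0 : ℂ) 1, ∀ u v : X, ∀ p : T.Walk u v,
      p.length = T.dist u v → c z u v = walkProd (c z) p)
    (x y a b : X) (p : T.Walk x y) (hp : p.length = T.dist x y)
    (hside : ∀ i < p.length,
      (T.dist a (p.getVert i) < T.dist a (p.getVert (i + 1)) ↔
        T.dist b (p.getVert i) < T.dist b (p.getVert (i + 1)))) :
    ∀ z ∈ Metric.ball (0 : ℂ) 1,
      (a = b →
        (inner ℂ (delta a) (c z x y (delta b)) : ℂ) =
          W z ^ ((Finset.range p.length).filter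
            (fun i => p.getVert i = a ∨ p.getVert (i + 1) = a)).card) ∧
      (a ≠ b → (inner ℂ (delta a) (c z x y (delta b)) : ℂ) = 0) :=
  matrix_coefficient_same_side_general T c hedge hgeo x y a b p hp hside
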